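/- arXiv:1508.02783 — 2 statements merged into one kernel-verified Lean document; each statement's English description precedes it below -/
import Mathlib

section
/- (Anisotropic Troisi inequality, special case) There is a universal constant C such that for every smooth compactly supported function f : ℝ³ → ℝ, ‖f‖_{L⁶(ℝ³)} ≤ C ‖∂₁f‖_{L²}^{1/3} ‖∂₂f‖_{L²}^{1/3} ‖∂₃f‖_{L²}^{1/3}. -/
open MeasureTheory
open scoped ENNReal

noncomputable def pd (i : Fin 3) (f : EuclideanSpace ℝ (Fin 3) → ℝ)
    (x : EuclideanSpace ℝ (Fin 3)) : ℝ :=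
  fderiv ℝ f x (EuclideanSpace.single i 1)


noncomputable abbrev E3 := EuclideanSpace ℝ (Fin 3)

noncomputable def ew : E3 ≃ₗ[ℝ] (Fin 3 → ℝ) := WithLp.linearEquiv 2 ℝ (Fin 3 → ℝ)

noncomputable def scaleL (c : Fin 3 → ℝ) : E3 →ₗ[ℝ] E3 :=
  ew.symm.toLinearMap ∘ₗ (Matrix.toLin' (Matrix.diagonal c)) ∘ₗ ew.toLinearMap

lemma scaleL_apply (c : Fin 3 → ℝ) (x : E3) (i : Fin 3) : scaleL c x i = c i * x i := by
  simp [scaleL, ew, Matrix.toLin'_apply, Matrix.mulVec_diagonal]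

lemma scaleL_det (c : Fin 3 → ℝ) : LinearMap.det (scaleL c) = c 0 * c 1 * c 2 := by
  have : scaleL c = ew.symm.toLinearMap ∘ₗ (Matrix.toLin' (Matrix.diagonal c)) ∘ₗ
      (ew.symm : (Fin 3 → ℝ) ≃ₗ[ℝ] E3).symm.toLinearMap := rfl
  rw [this, LinearMap.det_conj, LinearMap.det_toLin', Matrix.det_diagonal, Fin.prod_univ_three]

lemma coord_le_norm (v : E3) (i : Fin 3) : |v i| ≤ ‖v‖ := by
  rw [EuclideanSpace.norm_eq]
  rw [show |v i| = Real.sqrt (‖v i‖ ^ 2) by simp [Real.sqrt_sq_eq_abs]]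
  apply Real.sqrt_le_sqrt
  exact Finset.single_le_sum (f := fun j => ‖v j‖ ^ 2) (fun j _ => by positivity) (Finset.mem_univ i)

lemma decomp (w : E3) : w = ∑ i, w i • (EuclideanSpace.single i 1 : E3) := by
  ext j
  simp [Fin.sum_univ_three, EuclideanSpace.single_apply]
  fin_cases j <;> simp

noncomputable def T (c : Fin 3 → ℝ) : E3 →L[ℝ] E3 :=
  LinearMap.toContinuousLinearMap (scaleL c)

lemma opNorm_bound (f : E3 → ℝ) (c : Fin 3 → ℝ) (y : E3) :
    ‖(fderiv ℝ f y).comp (T c)‖ ≤ ∑ i, |c i| * |pd i f y| := by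
  apply ContinuousLinearMap.opNorm_le_bound _ (by positivity)
  intro v
  have hTv : (T c) v = ∑ i, (c i * v i) • (EuclideanSpace.single i 1 : E3) := by
    rw [show ((T c) v : E3) = scaleL c v from rfl, decomp (scaleL c v)]
    congr 1; ext i; rw [scaleL_apply]
  rw [ContinuousLinearMap.comp_apply, hTv, map_sum]
  simp only [_root_.map_smul, smul_eq_mul]
  calc ‖∑ i, c i * v i * fderiv ℝ f y (EuclideanSpace.single i 1)‖
      ≤ ∑ i, ‖c i * v i * fderiv ℝ f y (EuclideanSpace.single i 1)‖ := norm_sum_le _ _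
    _ ≤ ∑ i, (|c i| * |pd i f y|) * ‖v‖ := by
        apply Finset.sum_le_sum
        intro i _
        rw [Real.norm_eq_abs, abs_mul, abs_mul, pd]
        calc |c i| * |v i| * |fderiv ℝ f y (EuclideanSpace.single i 1)|
            ≤ |c i| * ‖v‖ * |fderiv ℝ f y (EuclideanSpace.single i 1)| := by
              gcongr; exact coord_le_norm v i
          _ = |c i| * |fderiv ℝ f y (EuclideanSpace.single i 1)| * ‖v‖ := by ring
    _ = (∑ i, |c i| * |pd i f y|) * ‖v‖ := by rw [Finset.sum_mul]

lemma T_apply (c : Fin 3 → ℝ) (x : E3) (i : Fin 3) : T c x i = c i * x i := scaleL_apply c x i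

noncomputable def scaleHom (c : Fin 3 → ℝ) (hc : ∀ i, c i ≠ 0) : E3 ≃ₜ E3 where
  toFun := T c
  invFun := T (fun i => (c i)⁻¹)
  left_inv x := by ext i; rw [T_apply, T_apply]; field_simp; exact mul_div_cancel_left₀ _ (hc i)
  right_inv x := by ext i; rw [T_apply, T_apply]; field_simp; exact mul_div_cancel_left₀ _ (hc i)
  continuous_toFun := (T c).continuous
  continuous_invFun := (T _).continuous

lemma measurePreserving_T (c : Fin 3 → ℝ) (hdet : c 0 * c 1 * c 2 = 1) :
    MeasurePreserving (⇑(T c)) (volume : Measure E3) volume := by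
  refine ⟨(T c).continuous.measurable, ?_⟩
  have hd : LinearMap.det (scaleL c) ≠ 0 := by rw [scaleL_det, hdet]; norm_num
  have : Measure.map (⇑(scaleL c)) (volume : Measure E3) =
      ENNReal.ofReal |(LinearMap.det (scaleL c))⁻¹| • volume :=
    Measure.map_linearMap_addHaar_eq_smul_addHaar volume hd
  rw [show ⇑(T c) = ⇑(scaleL c) from rfl, this, scaleL_det, hdet]
  simp

lemma pd_continuous (i : Fin 3) (f : E3 → ℝ) (hf : ContDiff ℝ (⊤ : ℕ∞) f) : Continuous (pd i f) := by
  have h := (hf.fderiv_right (m := (⊤ : ℕ∞)) le_rfl).continuous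
  exact (ContinuousLinearMap.apply ℝ ℝ (EuclideanSpace.single i 1 : E3)).continuous.comp h

set_option maxHeartbeats 2000000 in
lemma key (K : NNReal)
    (sob : ∀ u : E3 → ℝ, ContDiff ℝ 1 u → HasCompactSupport u →
      eLpNorm u 6 volume ≤ K * eLpNorm (fderiv ℝ u) 2 volume)
    (f : E3 → ℝ) (hf : ContDiff ℝ (⊤ : ℕ∞) f) (h2f : HasCompactSupport f)
    (c : Fin 3 → ℝ) (hc : ∀ i, 0 < c i) (hdet : c 0 * c 1 * c 2 = 1) :
    eLpNorm f 6 volume ≤ K * ∑ i, ENNReal.ofReal (c i) * eLpNorm (pd i f) 2 volume := by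
  have hc' : ∀ i, c i ≠ 0 := fun i => (hc i).ne'
  set u : E3 → ℝ := f ∘ ⇑(T c) with hu_def
  have hu : ContDiff ℝ 1 u := (hf.of_le (by simp)).comp (T c).contDiff
  have h2u : HasCompactSupport u := h2f.comp_homeomorph (scaleHom c hc')
  have mp := measurePreserving_T c hdet
  -- chain rule
  have hdf : Differentiable ℝ f := hf.differentiable (by simp)
  have chain : ∀ x, fderiv ℝ u x = (fderiv ℝ f (T c x)).comp (T c) := by
    intro x
    rw [hu_def, fderiv_comp x (hdf _) (T c).differentiableAt, (T c).fderiv]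
  -- step 1 : eLpNorm f = eLpNorm u
  have e1 : eLpNorm u 6 volume = eLpNorm f 6 volume :=
    eLpNorm_comp_measurePreserving (hf.continuous.aestronglyMeasurable) mp
  -- step 2 : pointwise bound
  have e2 : eLpNorm (fderiv ℝ u) 2 volume ≤
      eLpNorm (fun x => ∑ i, |c i| * |pd i f (T c x)|) 2 volume := by
    apply eLpNorm_mono_real
    intro x
    rw [chain x]
    exact opNorm_bound f c (T c x)
  -- step 3 : triangle inequality
  have meas_i : ∀ i : Fin 3, AEStronglyMeasurable (fun x => |c i| * |pd i f (T c x)|)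
      (volume : Measure E3) := by
    intro i
    exact (continuous_const.mul ((pd_continuous i f hf).comp (T c).continuous).abs).aestronglyMeasurable
  have e3 : eLpNorm (fun x => ∑ i, |c i| * |pd i f (T c x)|) 2 volume ≤
      ∑ i, eLpNorm (fun x => |c i| * |pd i f (T c x)|) 2 volume := by
    have := eLpNorm_sum_le (f := fun (i : Fin 3) => fun x => |c i| * |pd i f (T c x)|)
      (s := Finset.univ) (μ := (volume : Measure E3)) (p := 2)
      (fun i _ => meas_i i) (by norm_num)
    simpa [Finset.sum_fn] using this
  have e4 : ∀ i : Fin 3, eLpNorm (fun x => |c i| * |pd i f (T c x)|) 2 volume =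
      ENNReal.ofReal (c i) * eLpNorm (pd i f) 2 volume := by
    intro i
    have h1 : eLpNorm (fun x => |c i| * |pd i f (T c x)|) 2 (volume : Measure E3) =
        eLpNorm (c i • ((pd i f) ∘ ⇑(T c))) 2 volume := by
      apply eLpNorm_congr_norm_ae
      filter_upwards with x
      simp [Real.norm_eq_abs, abs_mul, Function.comp, smul_eq_mul]
    rw [h1, eLpNorm_const_smul]
    have h3 : eLpNorm ((pd i f) ∘ ⇑(T c)) 2 (volume : Measure E3) =
        eLpNorm (pd i f) 2 volume :=
      eLpNorm_comp_measurePreserving (pd_continuous i f hf).aestronglyMeasurable mp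
    rw [h3]
    congr 1
    rw [show ‖c i‖ₑ = ENNReal.ofReal ‖c i‖ from (ofReal_norm _).symm]
    rw [Real.norm_eq_abs, abs_of_pos (hc i)]
  calc eLpNorm f 6 volume = eLpNorm u 6 volume := e1.symm
    _ ≤ K * eLpNorm (fderiv ℝ u) 2 volume := sob u hu h2u
    _ ≤ K * ∑ i, ENNReal.ofReal (c i) * eLpNorm (pd i f) 2 volume := by
        gcongr
        refine e2.trans (e3.trans ?_)
        exact le_of_eq (Finset.sum_congr rfl fun i _ => e4 i)

lemma f_eq_zero_of_pd (f : E3 → ℝ) (hf : ContDiff ℝ (⊤ : ℕ∞) f) (h2f : HasCompactSupport f)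
    (i : Fin 3) (h : ∀ x, pd i f x = 0) : ∀ x, f x = 0 := by
  intro x
  obtain ⟨R, hR⟩ := h2f.isBounded.subset_closedBall (0 : E3)
  set e : E3 := EuclideanSpace.single i 1 with he
  set g : ℝ → ℝ := fun t => f (x + t • e) with hg_def
  have hg : ∀ t : ℝ, HasDerivAt g 0 t := by
    intro t
    have h1 : HasDerivAt (fun t : ℝ => x + t • e) e t := by
      simpa using ((hasDerivAt_id t).smul_const e).const_add x
    have h2 : HasFDerivAt f (fderiv ℝ f (x + t • e)) (x + t • e) :=
      (hf.differentiable (by simp) _).hasFDerivAt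
    have h3 := h2.comp_hasDerivAt t h1
    have h4 : fderiv ℝ f (x + t • e) e = 0 := h (x + t • e)
    rwa [h4] at h3
  have hdiff : Differentiable ℝ g := fun t => (hg t).differentiableAt
  have hderiv : ∀ t, deriv g t = 0 := fun t => (hg t).deriv
  set T : ℝ := ‖x‖ + |R| + 1 with hT
  have hnorm : ‖e‖ = 1 := by rw [he, EuclideanSpace.norm_single]; simp
  have hout : x + T • e ∉ tsupport f := by
    intro hmem
    have h5 : ‖x + T • e‖ ≤ R := by simpa using Metric.mem_closedBall.mp (hR hmem)
    have h6 : ‖T • e‖ ≤ ‖x + T • e‖ + ‖x‖ := by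
      calc ‖T • e‖ = ‖(x + T • e) - x‖ := by congr 1; abel
        _ ≤ ‖x + T • e‖ + ‖x‖ := norm_sub_le _ _
    have h7 : ‖T • e‖ = T := by
      rw [norm_smul, hnorm, Real.norm_eq_abs, mul_one, abs_of_pos]
      positivity
    have : |R| ≤ R - 1 := by rw [hT] at h6; rw [h7] at h6; linarith [h6, h5]
    have := abs_nonneg R
    have := le_abs_self R
    linarith
  have hzero : f (x + T • e) = 0 := image_eq_zero_of_notMem_tsupport hout
  have hconst : g 0 = g T := is_const_of_deriv_eq_zero hdiff hderiv 0 T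
  have : f x = g 0 := by rw [hg_def]; simp
  rw [this, hconst, hg_def]
  exact hzero

lemma sobolev_E3 : ∃ K : NNReal, ∀ u : E3 → ℝ, ContDiff ℝ 1 u → HasCompactSupport u →
    eLpNorm u 6 volume ≤ K * eLpNorm (fderiv ℝ u) 2 volume := by
  refine ⟨eLpNormLESNormFDerivOfEqInnerConst (volume : Measure E3) 2, fun u hu h2u => ?_⟩
  exact eLpNorm_le_eLpNorm_fderiv_of_eq_inner (volume : Measure E3)
    hu h2u (p := 2) (p' := 6) (by norm_num) (by simp [finrank_euclideanSpace_fin])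
    (by rw [finrank_euclideanSpace_fin]; norm_num)

set_option maxHeartbeats 1000000 in
/-- Anisotropic Troisi inequality (special case): there is a universal constant `C` such
that for every smooth compactly supported `f : ℝ³ → ℝ`,
`‖f‖_{L⁶} ≤ C ‖∂₁f‖_{L²}^{1/3} ‖∂₂f‖_{L²}^{1/3} ‖∂₃f‖_{L²}^{1/3}`. -/
theorem stmt_3 : ∃ C : ℝ, 0 < C ∧
    ∀ f : EuclideanSpace ℝ (Fin 3) → ℝ, ContDiff ℝ (⊤ : ℕ∞) f → HasCompactSupport f →
      (eLpNorm f 6 volume).toReal ≤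
        C * (eLpNorm (pd 0 f) 2 volume).toReal ^ ((1 : ℝ)/3) *
          (eLpNorm (pd 1 f) 2 volume).toReal ^ ((1 : ℝ)/3) *
          (eLpNorm (pd 2 f) 2 volume).toReal ^ ((1 : ℝ)/3) := by
  obtain ⟨K, sob⟩ := sobolev_E3
  refine ⟨3 * ((K : ℝ) + 1), by positivity, fun f hf h2f => ?_⟩
  have hpdc : ∀ i, Continuous (pd i f) := fun i => pd_continuous i f hf
  have hpds : ∀ i : Fin 3, HasCompactSupport (pd i f) := by
    intro i
    have h1 : HasCompactSupport (fderiv ℝ f) := h2f.fderiv ℝ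
    exact h1.comp_left (g := fun L : E3 →L[ℝ] ℝ => L (EuclideanSpace.single i 1)) (by simp)
  set A : Fin 3 → ℝ≥0∞ := fun i => eLpNorm (pd i f) 2 volume with hA
  set a : Fin 3 → ℝ := fun i => (A i).toReal with ha
  have hA_lt : ∀ i, A i < ⊤ := fun i =>
    ((hpdc i).memLp_of_hasCompactSupport (hpds i)).eLpNorm_lt_top
  have ha_nonneg : ∀ i, 0 ≤ a i := fun i => ENNReal.toReal_nonneg
  by_cases hz : ∃ i, a i = 0
  · -- degenerate case : f = 0
    obtain ⟨i, hi⟩ := hz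
    have hAi : A i = 0 := by
      rcases (ENNReal.toReal_eq_zero_iff _).mp hi with h | h
      · exact h
      · exact absurd h (hA_lt i).ne
    have hae : pd i f =ᵐ[volume] 0 :=
      (eLpNorm_eq_zero_iff (hpdc i).aestronglyMeasurable (by norm_num)).mp hAi
    have hpd0 : ∀ x, pd i f x = 0 := by
      have := (Continuous.ae_eq_iff_eq volume (hpdc i) continuous_const).mp hae
      intro x; rw [this]; rfl
    have hf0 : ∀ x, f x = 0 := f_eq_zero_of_pd f hf h2f i hpd0
    have : eLpNorm f 6 (volume : Measure E3) = 0 := by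
      rw [show f = (0 : E3 → ℝ) from funext hf0]; exact eLpNorm_zero
    rw [this]
    simp only [ENNReal.toReal_zero]
    have h1 : (0:ℝ) ≤ a 0 ^ ((1:ℝ)/3) := Real.rpow_nonneg (ha_nonneg 0) _
    have h2 : (0:ℝ) ≤ a 1 ^ ((1:ℝ)/3) := Real.rpow_nonneg (ha_nonneg 1) _
    have h3 : (0:ℝ) ≤ a 2 ^ ((1:ℝ)/3) := Real.rpow_nonneg (ha_nonneg 2) _
    have hC : (0:ℝ) ≤ 3 * ((K : ℝ) + 1) := by positivity
    exact mul_nonneg (mul_nonneg (mul_nonneg hC h1) h2) h3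
  · push_neg at hz
    have hapos : ∀ i, 0 < a i := fun i => lt_of_le_of_ne (ha_nonneg i) (Ne.symm (hz i))
    set G : ℝ := (a 0 * a 1 * a 2) ^ ((1:ℝ)/3) with hG
    have hP : (0:ℝ) < a 0 * a 1 * a 2 := mul_pos (mul_pos (hapos 0) (hapos 1)) (hapos 2)
    have hGpos : 0 < G := Real.rpow_pos_of_pos hP _
    have hG3 : G * G * G = a 0 * a 1 * a 2 := by
      rw [hG, ← Real.rpow_add hP, ← Real.rpow_add hP]
      norm_num
    set c : Fin 3 → ℝ := fun i => G / a i with hc_def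
    have hcpos : ∀ i, 0 < c i := fun i => div_pos hGpos (hapos i)
    have hdet : c 0 * c 1 * c 2 = 1 := by
      have h9 : c 0 * c 1 * c 2 = (G * G * G) / (a 0 * a 1 * a 2) := by
        rw [hc_def]; ring
      rw [h9, hG3, div_self hP.ne']
    have hkey := key K sob f hf h2f c hcpos hdet
    have hfin : (K : ℝ≥0∞) * ∑ i, ENNReal.ofReal (c i) * A i ≠ ⊤ := by
      apply ENNReal.mul_ne_top ENNReal.coe_ne_top
      rw [Fin.sum_univ_three]
      exact ENNReal.add_ne_top.mpr ⟨ENNReal.add_ne_top.mpr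
        ⟨ENNReal.mul_ne_top ENNReal.ofReal_ne_top (hA_lt 0).ne,
         ENNReal.mul_ne_top ENNReal.ofReal_ne_top (hA_lt 1).ne⟩,
        ENNReal.mul_ne_top ENNReal.ofReal_ne_top (hA_lt 2).ne⟩
    have hle := ENNReal.toReal_mono hfin hkey
    have hrhs : ((K : ℝ≥0∞) * ∑ i, ENNReal.ofReal (c i) * A i).toReal
        = (K : ℝ) * (c 0 * a 0 + c 1 * a 1 + c 2 * a 2) := by
      rw [ENNReal.toReal_mul, ENNReal.coe_toReal, Fin.sum_univ_three,
        ENNReal.toReal_add (ENNReal.add_ne_top.mpr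
          ⟨ENNReal.mul_ne_top ENNReal.ofReal_ne_top (hA_lt 0).ne,
           ENNReal.mul_ne_top ENNReal.ofReal_ne_top (hA_lt 1).ne⟩)
          (ENNReal.mul_ne_top ENNReal.ofReal_ne_top (hA_lt 2).ne),
        ENNReal.toReal_add (ENNReal.mul_ne_top ENNReal.ofReal_ne_top (hA_lt 0).ne)
          (ENNReal.mul_ne_top ENNReal.ofReal_ne_top (hA_lt 1).ne),
        ENNReal.toReal_mul, ENNReal.toReal_mul, ENNReal.toReal_mul,
        ENNReal.toReal_ofReal (hcpos 0).le, ENNReal.toReal_ofReal (hcpos 1).le,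
        ENNReal.toReal_ofReal (hcpos 2).le]
    have hca : ∀ i, c i * a i = G := fun i => div_mul_cancel₀ G (hapos i).ne'
    rw [hrhs, hca 0, hca 1, hca 2] at hle
    have hGsplit : G = a 0 ^ ((1:ℝ)/3) * a 1 ^ ((1:ℝ)/3) * a 2 ^ ((1:ℝ)/3) := by
      rw [hG, Real.mul_rpow (by positivity) (ha_nonneg 2),
        Real.mul_rpow (ha_nonneg 0) (ha_nonneg 1)]
    calc (eLpNorm f 6 volume).toReal ≤ (K : ℝ) * (G + G + G) := hle
      _ = 3 * (K : ℝ) * G := by ring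
      _ ≤ 3 * ((K : ℝ) + 1) * G := by nlinarith [hGpos.le, hGpos]
      _ = 3 * ((K : ℝ) + 1) * (a 0 ^ ((1:ℝ)/3) * a 1 ^ ((1:ℝ)/3) * a 2 ^ ((1:ℝ)/3)) := by
          rw [hGsplit]
      _ = 3 * ((K : ℝ) + 1) * a 0 ^ ((1:ℝ)/3) * a 1 ^ ((1:ℝ)/3) * a 2 ^ ((1:ℝ)/3) := by ring
end

section
/- Let u, b : ℝ³ → ℝ³ be smooth rapidly decaying divergence-free fields. Then ∫_{ℝ³} [(u·∇)u·Δu − (b·∇)b·Δu + (u·∇)b·Δb − (b·∇)u·Δb] dx ≤ C ∫_{ℝ³} (|∇_h u| + |∇_h b|)(|∇u|² + |∇b|²) dx, for a universal constant C, where ∇_h = (∂₁, ∂₂, 0). -/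
/-!
Integrating by parts once in each Laplacian turns `∫ (v·∇)f · ∂ₖ²g` into
`-∫ (∂ₖv·∇)f · ∂ₖg - ∫ (v·∇)∂ₖf · ∂ₖg`, and for divergence-free `v` the transport terms
`∫ (v·∇)F · G + ∫ (v·∇)G · F` vanish; pairing the four terms of the nonlinearity this way
leaves only integrals of monomials `∂ₖaᵢ ∂ᵢcⱼ ∂ₖdⱼ` in the entries of `∇u` and `∇b`.
In each monomial `k` or `i` is a horizontal index, or `k = i = 3` and
`∂₃a₃ = -∂₁a₁ - ∂₂a₂`; either way one factor is bounded by `|∇ₕu| + |∇ₕb|`, and the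
product of the other two by `|∇u|² + |∇b|²`.
-/
open MeasureTheory SchwartzMap

noncomputable def lap (f : EuclideanSpace ℝ (Fin 3) → ℝ)
    (x : EuclideanSpace ℝ (Fin 3)) : ℝ :=
  ∑ i : Fin 3, pd i (pd i f) x

open scoped LineDeriv Laplacian

theorem abs_mul_le_of_sq_le {a b G : ℝ} (ha : a ^ 2 ≤ G) (hb : b ^ 2 ≤ G) :
    |a * b| ≤ G := by
  rw [abs_mul]
  nlinarith [sq_abs a, sq_abs b, sq_nonneg (|a| - |b|)]

namespace Matrix

variable {n : ℕ} {l m : Type*} [Fintype l] [Fintype m]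

def frobSq (p : Matrix m l ℝ) : ℝ := ∑ i, ∑ j, p i j ^ 2

noncomputable def horizNorm (p : Matrix (Fin (n + 1)) l ℝ) : ℝ :=
  √(frobSq (p.submatrix Fin.castSucc id))

theorem frobSq_nonneg (p : Matrix m l ℝ) : 0 ≤ frobSq p := by
  unfold frobSq; positivity

theorem sq_le_frobSq (p : Matrix m l ℝ) (i : m) (j : l) : p i j ^ 2 ≤ frobSq p :=
  (Finset.single_le_sum (f := fun j => p i j ^ 2) (fun _ _ => sq_nonneg _)
    (Finset.mem_univ j)).trans
  (Finset.single_le_sum (f := fun i => ∑ j, p i j ^ 2)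
    (fun _ _ => Finset.sum_nonneg fun _ _ => sq_nonneg _) (Finset.mem_univ i))

theorem horizNorm_nonneg (p : Matrix (Fin (n + 1)) l ℝ) : 0 ≤ horizNorm p := Real.sqrt_nonneg _

theorem abs_le_horizNorm (p : Matrix (Fin (n + 1)) l ℝ) (k : Fin n) (j : l) :
    |p k.castSucc j| ≤ horizNorm p := by
  rw [← Real.sqrt_sq_eq_abs]
  exact Real.sqrt_le_sqrt (sq_le_frobSq (p.submatrix Fin.castSucc id) k j)

theorem horizNorm_le_sqrt_frobSq (p : Matrix (Fin (n + 1)) l ℝ) :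
    horizNorm p ≤ √(frobSq p) := by
  refine Real.sqrt_le_sqrt ?_
  simp only [frobSq, submatrix_apply, id, Fin.sum_univ_castSucc (n := n)]
  exact le_add_of_nonneg_right (by positivity)

theorem abs_last_last_le_horizNorm {p : Matrix (Fin (n + 1)) (Fin (n + 1)) ℝ}
    (hp : p.trace = 0) : |p (Fin.last n) (Fin.last n)| ≤ n * horizNorm p := by
  have hlast : p (Fin.last n) (Fin.last n) = -∑ k : Fin n, p k.castSucc k.castSucc := by
    rw [trace, Fin.sum_univ_castSucc] at hp
    simp only [diag_apply] at hp
    linarith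
  rw [hlast, abs_neg]
  calc |∑ k : Fin n, p k.castSucc k.castSucc| ≤ ∑ k : Fin n, |p k.castSucc k.castSucc| :=
        Finset.abs_sum_le_sum_abs _ _
    _ ≤ ∑ _k : Fin n, horizNorm p := Finset.sum_le_sum fun k _ => abs_le_horizNorm p k _
    _ = n * horizNorm p := by simp

/-- Either `k` or `i` is a horizontal index, or `k = i` is the vertical index and the trace
condition bounds `a k k` by horizontal entries. -/
theorem abs_mul_mul_le {a b c : Matrix (Fin (n + 1)) (Fin (n + 1)) ℝ} {H G : ℝ}
    (ha : a.trace = 0) (hHa : horizNorm a ≤ H) (hHb : horizNorm b ≤ H)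
    (hGa : frobSq a ≤ G) (hGb : frobSq b ≤ G) (hGc : frobSq c ≤ G) (k i j : Fin (n + 1)) :
    |a k i * b i j * c k j| ≤ (n + 1) * H * G := by
  have hH : 0 ≤ H := (horizNorm_nonneg a).trans hHa
  have hHn : H ≤ (n + 1) * H := le_mul_of_one_le_left hH (by linarith [n.cast_nonneg (α := ℝ)])
  have of_factor_le : ∀ {x y z : ℝ}, |x| ≤ (n + 1) * H → y ^ 2 ≤ G → z ^ 2 ≤ G →
      |x * y * z| ≤ (n + 1) * H * G := fun hx hy hz => by
    rw [mul_assoc, abs_mul]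
    exact mul_le_mul hx (abs_mul_le_of_sq_le hy hz) (abs_nonneg _) (by positivity)
  rcases Fin.eq_castSucc_or_eq_last k with ⟨k, rfl⟩ | rfl
  · exact of_factor_le ((abs_le_horizNorm a k i).trans (hHa.trans hHn))
      ((sq_le_frobSq b i j).trans hGb) ((sq_le_frobSq c _ j).trans hGc)
  rcases Fin.eq_castSucc_or_eq_last i with ⟨i, rfl⟩ | rfl
  · rw [mul_comm (a _ _)]
    exact of_factor_le ((abs_le_horizNorm b i j).trans (hHb.trans hHn))
      ((sq_le_frobSq a _ _).trans hGa) ((sq_le_frobSq c _ j).trans hGc)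
  · refine of_factor_le ((abs_last_last_le_horizNorm ha).trans ?_)
      ((sq_le_frobSq b _ j).trans hGb) ((sq_le_frobSq c _ j).trans hGc)
    nlinarith [horizNorm_nonneg a]

theorem abs_mul_apply_mul_le {a b c : Matrix (Fin (n + 1)) (Fin (n + 1)) ℝ} {H G : ℝ}
    (ha : a.trace = 0) (hHa : horizNorm a ≤ H) (hHb : horizNorm b ≤ H)
    (hGa : frobSq a ≤ G) (hGb : frobSq b ≤ G) (hGc : frobSq c ≤ G) (k j : Fin (n + 1)) :
    |(a * b) k j * c k j| ≤ (n + 1) ^ 2 * H * G := by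
  rw [mul_apply, Finset.sum_mul]
  calc |∑ i, a k i * b i j * c k j| ≤ ∑ i, |a k i * b i j * c k j| :=
        Finset.abs_sum_le_sum_abs _ _
    _ ≤ ∑ _i : Fin (n + 1), (n + 1) * H * G :=
        Finset.sum_le_sum fun i _ => abs_mul_mul_le ha hHa hHb hGa hGb hGc k i j
    _ = (n + 1) ^ 2 * H * G := by
        simp only [Finset.sum_const, Finset.card_univ, Fintype.card_fin, nsmul_eq_mul,
          Nat.cast_add, Nat.cast_one]
        ring

/-- With `p = ∇u` and `q = ∇b` (rows indexing derivatives), this is the integrand that the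
MHD nonlinearity tested against `(Δu, Δb)` becomes after one integration by parts. -/
def mhdTrilinear (p q : Matrix m m ℝ) : ℝ :=
  ∑ j, ∑ k, (-((p * p) k j * p k j) + (q * q) k j * p k j - (p * q) k j * q k j +
    (q * p) k j * q k j)

theorem mhdTrilinear_le {p q : Matrix (Fin (n + 1)) (Fin (n + 1)) ℝ}
    (hp : p.trace = 0) (hq : q.trace = 0) :
    mhdTrilinear p q ≤
      4 * (n + 1) ^ 4 * ((horizNorm p + horizNorm q) * (frobSq p + frobSq q)) := by
  set H := horizNorm p + horizNorm q
  set G := frobSq p + frobSq q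
  have hHp : horizNorm p ≤ H := le_add_of_nonneg_right (horizNorm_nonneg q)
  have hHq : horizNorm q ≤ H := le_add_of_nonneg_left (horizNorm_nonneg p)
  have hGp : frobSq p ≤ G := le_add_of_nonneg_right (frobSq_nonneg q)
  have hGq : frobSq q ≤ G := le_add_of_nonneg_left (frobSq_nonneg p)
  calc mhdTrilinear p q
      ≤ ∑ _j : Fin (n + 1), ∑ _k : Fin (n + 1), 4 * ((n + 1) ^ 2 * H * G) := by
        refine Finset.sum_le_sum fun j _ => Finset.sum_le_sum fun k _ => ?_
        obtain ⟨hpp, -⟩ := abs_le.mp (abs_mul_apply_mul_le hp hHp hHp hGp hGp hGp k j)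
        obtain ⟨-, hqq⟩ := abs_le.mp (abs_mul_apply_mul_le hq hHq hHq hGq hGq hGp k j)
        obtain ⟨hpq, -⟩ := abs_le.mp (abs_mul_apply_mul_le hp hHp hHq hGp hGq hGq k j)
        obtain ⟨-, hqp⟩ := abs_le.mp (abs_mul_apply_mul_le hq hHq hHp hGq hGp hGq k j)
        linarith
    _ = 4 * (n + 1) ^ 4 * (H * G) := by
        simp only [Finset.sum_const, Finset.card_univ, Fintype.card_fin, nsmul_eq_mul,
          Nat.cast_add, Nat.cast_one]
        ring

end Matrix

namespace SchwartzMap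

variable {D E F G : Type*} [NormedAddCommGroup D] [NormedSpace ℝ D]
  [NormedAddCommGroup E] [NormedSpace ℝ E] [NormedAddCommGroup F] [NormedSpace ℝ F]
  [NormedAddCommGroup G] [NormedSpace ℝ G]

theorem lineDerivOp_pairing (B : E →L[ℝ] F →L[ℝ] G) (m : D) (f : 𝓢(D, E)) (g : 𝓢(D, F)) :
    ∂_{m} (pairing B f g) = pairing B (∂_{m} f) g + pairing B f (∂_{m} g) := by
  ext x
  simp only [lineDerivOp_apply_eq_fderiv, add_apply, pairing_apply_apply]
  rw [pairing_apply, B.fderiv_of_bilinear f.differentiableAt g.differentiableAt]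
  simp [add_comm]

theorem lineDerivOp_comm (f : 𝓢(D, F)) (v w : D) : ∂_{v} (∂_{w} f) = ∂_{w} (∂_{v} f) := by
  ext x
  have hsymm : IsSymmSndFDerivAt ℝ f x := (f.smooth 2).contDiffAt.isSymmSndFDerivAt (by simp)
  have hdiff : Differentiable ℝ (fderiv ℝ f) :=
    ((f.smooth 2).fderiv_right (m := 1) (by norm_num)).differentiable one_ne_zero
  have hsecond : ∀ a b : D, (∂_{a} (∂_{b} f)) x = fderiv ℝ (fderiv ℝ f) x a b := by
    intro a b
    rw [lineDerivOp_apply_eq_fderiv, show ⇑(∂_{b} f : 𝓢(D, F)) = fun y => fderiv ℝ f y b from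
      funext (lineDerivOp_apply_eq_fderiv b f),
      fderiv_clm_apply (hdiff x) (differentiableAt_const b)]
    simp
  rw [hsecond, hsecond, hsymm]

variable [MeasurableSpace D] [BorelSpace D] [FiniteDimensional ℝ D]
  {μ : Measure D} [μ.IsAddHaarMeasure]

@[fun_prop]
theorem integrable_mul (f g : 𝓢(D, ℝ)) : Integrable (fun x => f x * g x) μ :=
  (pairing (ContinuousLinearMap.mul ℝ ℝ) f g).integrable

end SchwartzMap

section VectorField

variable {n : ℕ}

local notation "𝐞" i => EuclideanSpace.single i (1 : ℝ)

noncomputable def advection (v : Fin n → 𝓢(EuclideanSpace ℝ (Fin n), ℝ))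
    (f : 𝓢(EuclideanSpace ℝ (Fin n), ℝ)) : 𝓢(EuclideanSpace ℝ (Fin n), ℝ) :=
  ∑ i, pairing (ContinuousLinearMap.mul ℝ ℝ) (v i) (∂_{𝐞 i} f)

theorem advection_apply (v : Fin n → 𝓢(EuclideanSpace ℝ (Fin n), ℝ))
    (f : 𝓢(EuclideanSpace ℝ (Fin n), ℝ)) (x : EuclideanSpace ℝ (Fin n)) :
    advection v f x = ∑ i, v i x * ∂_{𝐞 i} f x := by
  simp [advection]

theorem lineDerivOp_advection (m : EuclideanSpace ℝ (Fin n))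
    (v : Fin n → 𝓢(EuclideanSpace ℝ (Fin n), ℝ)) (f : 𝓢(EuclideanSpace ℝ (Fin n), ℝ)) :
    ∂_{m} (advection v f) = advection (fun i => ∂_{m} (v i)) f + advection v (∂_{m} f) := by
  simp only [advection, LineDeriv.lineDerivOp_sum, lineDerivOp_pairing, lineDerivOp_comm _ m,
    Finset.sum_add_distrib]

noncomputable def gradMatrix (v : Fin n → 𝓢(EuclideanSpace ℝ (Fin n), ℝ))
    (x : EuclideanSpace ℝ (Fin n)) : Matrix (Fin n) (Fin n) ℝ :=
  Matrix.of fun k i => ∂_{𝐞 k} (v i) x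

theorem mhdTrilinear_gradMatrix (u b : Fin n → 𝓢(EuclideanSpace ℝ (Fin n), ℝ))
    (x : EuclideanSpace ℝ (Fin n)) :
    Matrix.mhdTrilinear (gradMatrix u x) (gradMatrix b x) =
      ∑ j, ∑ k : Fin n, (-(advection (fun i => ∂_{𝐞 k} (u i)) (u j) x * ∂_{𝐞 k} (u j) x) +
        advection (fun i => ∂_{𝐞 k} (b i)) (b j) x * ∂_{𝐞 k} (u j) x -
        advection (fun i => ∂_{𝐞 k} (u i)) (b j) x * ∂_{𝐞 k} (b j) x +
        advection (fun i => ∂_{𝐞 k} (b i)) (u j) x * ∂_{𝐞 k} (b j) x) := by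
  simp only [Matrix.mhdTrilinear, Matrix.mul_apply, gradMatrix, Matrix.of_apply, advection_apply]

theorem frobSq_gradMatrix_le (v : Fin n → 𝓢(EuclideanSpace ℝ (Fin n), ℝ))
    (x : EuclideanSpace ℝ (Fin n)) :
    Matrix.frobSq (gradMatrix v x) ≤
      ∑ k : Fin n, ∑ i, SchwartzMap.seminorm ℝ 0 0 (∂_{𝐞 k} (v i)) ^ 2 :=
  Finset.sum_le_sum fun k _ => Finset.sum_le_sum fun i _ => by
    rw [gradMatrix, Matrix.of_apply, ← sq_abs, ← Real.norm_eq_abs]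
    exact pow_le_pow_left₀ (norm_nonneg _) (norm_le_seminorm ℝ _ x) 2

variable {μ : Measure (EuclideanSpace ℝ (Fin n))} [μ.IsAddHaarMeasure]

theorem integral_advection_mul_add_swap {v : Fin n → 𝓢(EuclideanSpace ℝ (Fin n), ℝ)}
    (hv : ∀ x, ∑ i, ∂_{𝐞 i} (v i) x = 0) (f g : 𝓢(EuclideanSpace ℝ (Fin n), ℝ)) :
    (∫ x, advection v f x * g x ∂μ) + ∫ x, advection v g x * f x ∂μ = 0 := by
  let fg := pairing (ContinuousLinearMap.mul ℝ ℝ) f g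
  rw [← integral_add (by fun_prop) (by fun_prop)]
  calc ∫ x, advection v f x * g x + advection v g x * f x ∂μ
      = ∑ i, ∫ x, v i x * ∂_{𝐞 i} fg x ∂μ := by
        rw [← integral_finsetSum _ fun i _ => integrable_mul _ _]
        congr 1 with x
        simp only [fg, advection_apply, lineDerivOp_pairing, add_apply, pairing_apply_apply,
          ContinuousLinearMap.mul_apply', Finset.sum_mul, ← Finset.sum_add_distrib, mul_add]
        exact Finset.sum_congr rfl fun i _ => by ring
    _ = -∫ x, (∑ i, ∂_{𝐞 i} (v i) x) * fg x ∂μ := by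
        simp only [integral_mul_lineDerivOp_right_eq_neg_left, Finset.sum_neg_distrib,
          Finset.sum_mul]
        rw [integral_finsetSum _ fun i _ => integrable_mul _ _]
    _ = 0 := by simp [hv]

theorem integral_advection_mul_lineDerivOp_lineDerivOp_add_swap
    {v : Fin n → 𝓢(EuclideanSpace ℝ (Fin n), ℝ)} (hv : ∀ x, ∑ i, ∂_{𝐞 i} (v i) x = 0)
    (f g : 𝓢(EuclideanSpace ℝ (Fin n), ℝ)) (m : EuclideanSpace ℝ (Fin n)) :
    (∫ x, advection v f x * ∂_{m} (∂_{m} g) x ∂μ) +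
        ∫ x, advection v g x * ∂_{m} (∂_{m} f) x ∂μ =
      -((∫ x, advection (fun i => ∂_{m} (v i)) f x * ∂_{m} g x ∂μ) +
        ∫ x, advection (fun i => ∂_{m} (v i)) g x * ∂_{m} f x ∂μ) := by
  have ibp : ∀ F G : 𝓢(EuclideanSpace ℝ (Fin n), ℝ),
      ∫ x, advection v F x * ∂_{m} (∂_{m} G) x ∂μ =
        -(∫ x, advection (fun i => ∂_{m} (v i)) F x * ∂_{m} G x ∂μ) -
          ∫ x, advection v (∂_{m} F) x * ∂_{m} G x ∂μ := by
    intro F G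
    rw [integral_mul_lineDerivOp_right_eq_neg_left, lineDerivOp_advection]
    simp only [add_apply, add_mul]
    rw [integral_add (by fun_prop) (by fun_prop)]
    ring
  rw [ibp f g, ibp g f]
  linarith [integral_advection_mul_add_swap (μ := μ) hv (∂_{m} f) (∂_{m} g)]

theorem integral_mhd_advection_mul_lineDerivOp_lineDerivOp
    {u b : Fin n → 𝓢(EuclideanSpace ℝ (Fin n), ℝ)}
    (hu : ∀ x, ∑ i, ∂_{𝐞 i} (u i) x = 0) (hb : ∀ x, ∑ i, ∂_{𝐞 i} (b i) x = 0)
    (f g : 𝓢(EuclideanSpace ℝ (Fin n), ℝ)) (m : EuclideanSpace ℝ (Fin n)) :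
    ∫ x, (advection u f x * ∂_{m} (∂_{m} f) x - advection b g x * ∂_{m} (∂_{m} f) x +
        advection u g x * ∂_{m} (∂_{m} g) x - advection b f x * ∂_{m} (∂_{m} g) x) ∂μ =
      ∫ x, (-(advection (fun i => ∂_{m} (u i)) f x * ∂_{m} f x) +
        advection (fun i => ∂_{m} (b i)) g x * ∂_{m} f x -
        advection (fun i => ∂_{m} (u i)) g x * ∂_{m} g x +
        advection (fun i => ∂_{m} (b i)) f x * ∂_{m} g x) ∂μ := by
  rw [integral_sub (by fun_prop) (by fun_prop), integral_add (by fun_prop) (by fun_prop),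
    integral_sub (by fun_prop) (by fun_prop), integral_add (by fun_prop) (by fun_prop),
    integral_sub (by fun_prop) (by fun_prop), integral_add (by fun_prop) (by fun_prop),
    integral_neg]
  linarith [integral_advection_mul_lineDerivOp_lineDerivOp_add_swap (μ := μ) hu f f m,
    integral_advection_mul_lineDerivOp_lineDerivOp_add_swap (μ := μ) hu g g m,
    integral_advection_mul_lineDerivOp_lineDerivOp_add_swap (μ := μ) hb g f m]

theorem integral_mhd_advection_mul_laplacian {u b : Fin n → 𝓢(EuclideanSpace ℝ (Fin n), ℝ)}
    (hu : ∀ x, ∑ i, ∂_{𝐞 i} (u i) x = 0) (hb : ∀ x, ∑ i, ∂_{𝐞 i} (b i) x = 0)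
    (f g : 𝓢(EuclideanSpace ℝ (Fin n), ℝ)) :
    ∫ x, (advection u f x * Δ f x - advection b g x * Δ f x +
        advection u g x * Δ g x - advection b f x * Δ g x) ∂μ =
      ∑ k : Fin n, ∫ x, (-(advection (fun i => ∂_{𝐞 k} (u i)) f x * ∂_{𝐞 k} f x) +
        advection (fun i => ∂_{𝐞 k} (b i)) g x * ∂_{𝐞 k} f x -
        advection (fun i => ∂_{𝐞 k} (u i)) g x * ∂_{𝐞 k} g x +
        advection (fun i => ∂_{𝐞 k} (b i)) f x * ∂_{𝐞 k} g x) ∂μ := by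
  simp only [← integral_mhd_advection_mul_lineDerivOp_lineDerivOp hu hb]
  rw [← integral_finsetSum _ fun k _ => by fun_prop]
  congr 1 with x
  simp only [laplacian_eq_sum (EuclideanSpace.basisFun (Fin n) ℝ), EuclideanSpace.basisFun_apply,
    sum_apply, Finset.mul_sum, ← Finset.sum_sub_distrib, ← Finset.sum_add_distrib]

theorem integral_mhd_nonlinearity {u b : Fin n → 𝓢(EuclideanSpace ℝ (Fin n), ℝ)}
    (hu : ∀ x, ∑ i, ∂_{𝐞 i} (u i) x = 0) (hb : ∀ x, ∑ i, ∂_{𝐞 i} (b i) x = 0) :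
    ∫ x, ∑ j, (advection u (u j) x * Δ (u j) x - advection b (b j) x * Δ (u j) x +
        advection u (b j) x * Δ (b j) x - advection b (u j) x * Δ (b j) x) ∂μ =
      ∫ x, Matrix.mhdTrilinear (gradMatrix u x) (gradMatrix b x) ∂μ := by
  simp only [mhdTrilinear_gradMatrix]
  rw [integral_finsetSum _ fun j _ => by fun_prop, integral_finsetSum _ fun j _ => by fun_prop]
  refine Finset.sum_congr rfl fun j _ => ?_
  rw [integral_mhd_advection_mul_laplacian hu hb, integral_finsetSum _ fun k _ => by fun_prop]

theorem integrable_mhdTrilinear_gradMatrix (u b : Fin n → 𝓢(EuclideanSpace ℝ (Fin n), ℝ)) :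
    Integrable (fun x => Matrix.mhdTrilinear (gradMatrix u x) (gradMatrix b x)) μ := by
  simp only [mhdTrilinear_gradMatrix]
  fun_prop

theorem integrable_horizNorm_add_mul_frobSq_add
    {ν : Measure (EuclideanSpace ℝ (Fin (n + 1)))} [ν.IsAddHaarMeasure]
    (u b : Fin (n + 1) → 𝓢(EuclideanSpace ℝ (Fin (n + 1)), ℝ)) :
    Integrable (fun x => (Matrix.horizNorm (gradMatrix u x) + Matrix.horizNorm (gradMatrix b x)) *
      (Matrix.frobSq (gradMatrix u x) + Matrix.frobSq (gradMatrix b x))) ν := by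
  refine Integrable.bdd_mul
    (c := √(∑ k : Fin (n + 1), ∑ i, SchwartzMap.seminorm ℝ 0 0 (∂_{𝐞 k} (u i)) ^ 2) +
      √(∑ k : Fin (n + 1), ∑ i, SchwartzMap.seminorm ℝ 0 0 (∂_{𝐞 k} (b i)) ^ 2)) ?_ ?_ ?_
  · simp only [Matrix.frobSq, gradMatrix, Matrix.of_apply, sq]
    fun_prop
  · refine Continuous.aestronglyMeasurable ?_
    simp only [Matrix.horizNorm, Matrix.frobSq, Matrix.submatrix_apply, gradMatrix,
      Matrix.of_apply]
    fun_prop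
  · refine Filter.Eventually.of_forall fun x => ?_
    rw [Real.norm_eq_abs, abs_of_nonneg (add_nonneg (Matrix.horizNorm_nonneg _)
      (Matrix.horizNorm_nonneg _))]
    gcongr <;> exact (Matrix.horizNorm_le_sqrt_frobSq _).trans
      (Real.sqrt_le_sqrt (frobSq_gradMatrix_le _ x))

end VectorField

theorem pd_eq_lineDerivOp (i : Fin 3) (f : 𝓢(EuclideanSpace ℝ (Fin 3), ℝ)) :
    pd i f = ⇑(∂_{EuclideanSpace.single i (1 : ℝ)} f : 𝓢(EuclideanSpace ℝ (Fin 3), ℝ)) :=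
  funext fun x => (lineDerivOp_apply_eq_fderiv _ f x).symm

theorem lap_eq_laplacian (f : 𝓢(EuclideanSpace ℝ (Fin 3), ℝ)) :
    lap f = ⇑(Δ f : 𝓢(EuclideanSpace ℝ (Fin 3), ℝ)) := by
  ext x
  simp only [lap, pd_eq_lineDerivOp, laplacian_eq_sum (EuclideanSpace.basisFun (Fin 3) ℝ),
    EuclideanSpace.basisFun_apply, sum_apply]

/-- There is a universal constant `C` such that for all divergence-free Schwartz fields
`u, b` on `ℝ³`,
`∫ (u·∇)u·Δu − (b·∇)b·Δu + (u·∇)b·Δb − (b·∇)u·Δb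
  ≤ C ∫ (|∇_h u| + |∇_h b|)(|∇u|² + |∇b|²)`. -/
theorem stmt_13 : ∃ C : ℝ, 0 < C ∧
    ∀ u b : Fin 3 → 𝓢(EuclideanSpace ℝ (Fin 3), ℝ),
      (∀ x, ∑ i : Fin 3, pd i (u i) x = 0) →
      (∀ x, ∑ i : Fin 3, pd i (b i) x = 0) →
      (∫ x, ∑ j : Fin 3,
          ((∑ i : Fin 3, u i x * pd i (u j) x) * lap (u j) x -
            (∑ i : Fin 3, b i x * pd i (b j) x) * lap (u j) x +
            (∑ i : Fin 3, u i x * pd i (b j) x) * lap (b j) x -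
            (∑ i : Fin 3, b i x * pd i (u j) x) * lap (b j) x)) ≤
        C * ∫ x,
          (Real.sqrt (∑ k : Fin 2, ∑ j : Fin 3, (pd k.castSucc (u j) x) ^ 2) +
            Real.sqrt (∑ k : Fin 2, ∑ j : Fin 3, (pd k.castSucc (b j) x) ^ 2)) *
          ((∑ i : Fin 3, ∑ j : Fin 3, (pd i (u j) x) ^ 2) +
            ∑ i : Fin 3, ∑ j : Fin 3, (pd i (b j) x) ^ 2) := by
  refine ⟨4 * (2 + 1) ^ 4, by norm_num, fun u b hu hb => ?_⟩
  simp only [pd_eq_lineDerivOp, lap_eq_laplacian, ← advection_apply] at hu hb ⊢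
  rw [integral_mhd_nonlinearity hu hb, ← integral_const_mul]
  refine integral_mono (integrable_mhdTrilinear_gradMatrix u b)
    ((integrable_horizNorm_add_mul_frobSq_add u b).const_mul _) fun x => ?_
  exact Matrix.mhdTrilinear_le (hu x) (hb x)
end
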